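/- For every β, γ > 0 and every continuous φ : ℝ³ → ℝ satisfying |φ(v)| ≤ C(1 + |v|²) for some C > 0, one has L_β φ(v) = 0 for all v ∈ ℝ³ if and only if φ is constant; i.e., the kernel of the linear Boltzmann operator L_β consists exactly of the constant functions. -/

import Mathlib

/-!
Pair `L_β φ` with `φ M_β` and integrate in `v`. The collision involution
`(v, v⋆, n) ↦ (v', v⋆', -n)` preserves Lebesgue ⊗ surface measure, the product
`M_β(v) M_β(v⋆)` (conservation of energy) and the kernel `((v - v⋆)·n)₊`, so it symmetrises
`∫ φ M_β L_β φ` into `(γ/2) ∫ (φ(v) - φ(v'))² M_β(v) M_β(v⋆) ((v - v⋆)·n)₊`.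
If `L_β φ ≡ 0` this vanishes; the integrand is continuous and nonnegative, so `φ(v') = φ(v)`
whenever `(v - v⋆)·n > 0`, and `v⋆ = 0`, `n = v/|v|` gives `v' = 0`. The growth bound on `φ`
makes all integrands integrable against the Gaussian weights.
-/

open MeasureTheory Real

noncomputable section

abbrev R3 : Type := EuclideanSpace ℝ (Fin 3)

abbrev S2 : Type := Metric.sphere (0 : R3) 1

/-- Euclidean inner product on ℝ³. -/
noncomputable def dotp (x y : R3) : ℝ := inner ℝ x y

/-- The surface measure on the unit sphere `S² ⊂ ℝ³`. -/
noncomputable def sphMeasure : Measure S2 := (volume : Measure R3).toSphere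

/-- Lebesgue measure ⊗ surface measure on `ℝ³ × S²`. -/
noncomputable def prodMeas : Measure (R3 × S2) := (volume : Measure R3).prod sphMeasure

/-- The Maxwellian `M_β(v) = (β/(2π))^{3/2} exp(-β|v|²/2)`. -/
noncomputable def Mb (β : ℝ) (v : R3) : ℝ :=
  (β / (2 * π)) ^ ((3 : ℝ) / 2) * exp (-β * ‖v‖ ^ 2 / 2)

/-- Post-collision velocity `v' = v - ((v - v⋆)·n) n`. -/
noncomputable def vPost (v w : R3) (n : S2) : R3 := v - dotp (v - w) (n : R3) • (n : R3)

/-- Post-collision velocity `v⋆' = v⋆ + ((v - v⋆)·n) n`. -/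
noncomputable def wPost (v w : R3) (n : S2) : R3 := w + dotp (v - w) (n : R3) • (n : R3)

/-- The hard-sphere collision kernel `((v - v⋆)·n)₊`. -/
noncomputable def collKer (v w : R3) (n : S2) : ℝ := max (dotp (v - w) (n : R3)) 0

/-- The integrand of the linear Boltzmann operator `L_β φ(v)`. -/
noncomputable def LbInt (β : ℝ) (φ : R3 → ℝ) (v : R3) : R3 × S2 → ℝ :=
  fun p => (φ v - φ (vPost v p.1 p.2)) * Mb β p.1 * collKer v p.1 p.2

/-- The linear Boltzmann operator
`L_β φ(v) = γ ∫ (φ(v) - φ(v - ((v-v⋆)·n) n)) M_β(v⋆) ((v-v⋆)·n)₊ dv⋆ dn`. -/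
noncomputable def Lb (β γ : ℝ) (φ : R3 → ℝ) (v : R3) : ℝ := γ * ∫ p, LbInt β φ v p ∂prodMeas

section Collision

variable (v w : R3) (n : S2)

lemma dotp_self_eq_one : dotp (n : R3) n = 1 := by
  rw [dotp, real_inner_self_eq_norm_sq, norm_eq_of_mem_sphere, one_pow]

lemma dotp_vPost_sub_wPost : dotp (vPost v w n - wPost v w n) n = -dotp (v - w) n := by
  have h : vPost v w n - wPost v w n = (v - w) - (2 * dotp (v - w) n) • (n : R3) := by
    simp only [vPost, wPost]; module
  rw [h, dotp, inner_sub_left, real_inner_smul_left, ← dotp, ← dotp, dotp_self_eq_one]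
  ring

lemma vPost_vPost_wPost : vPost (vPost v w n) (wPost v w n) n = v := by
  rw [vPost, dotp_vPost_sub_wPost, vPost]; module

lemma wPost_vPost_wPost : wPost (vPost v w n) (wPost v w n) n = w := by
  rw [wPost, dotp_vPost_sub_wPost, wPost]; module

lemma vPost_neg : vPost v w (-n) = vPost v w n := by
  simp [vPost, dotp, inner_neg_right]

lemma wPost_neg : wPost v w (-n) = wPost v w n := by
  simp [wPost, dotp, inner_neg_right]

lemma collKer_vPost_wPost_neg : collKer (vPost v w n) (wPost v w n) (-n) = collKer v w n := by
  rw [collKer, coe_neg_sphere, dotp, inner_neg_right, ← dotp, dotp_vPost_sub_wPost, neg_neg,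
    collKer]

lemma collKer_nonneg : 0 ≤ collKer v w n := le_max_right _ _

lemma collKer_le : collKer v w n ≤ ‖v‖ + ‖w‖ := by
  refine max_le ?_ (by positivity)
  calc dotp (v - w) n ≤ ‖v - w‖ * ‖(n : R3)‖ := real_inner_le_norm _ _
    _ ≤ ‖v‖ + ‖w‖ := by rw [norm_eq_of_mem_sphere, mul_one]; exact norm_sub_le v w

lemma norm_vPost_sq_add_norm_wPost_sq :
    ‖vPost v w n‖ ^ 2 + ‖wPost v w n‖ ^ 2 = ‖v‖ ^ 2 + ‖w‖ ^ 2 := by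
  have hd : dotp (v - w) n = dotp v n - dotp w n := inner_sub_left _ _ _
  simp only [vPost, wPost]
  rw [norm_sub_sq_real, norm_add_sq_real, real_inner_smul_right, real_inner_smul_right,
    norm_smul, norm_eq_of_mem_sphere, Real.norm_eq_abs, mul_one, sq_abs, ← dotp, ← dotp, hd]
  ring

lemma Mb_vPost_mul_Mb_wPost (β : ℝ) :
    Mb β (vPost v w n) * Mb β (wPost v w n) = Mb β v * Mb β w := by
  simp only [Mb]
  rw [mul_mul_mul_comm, ← exp_add, mul_mul_mul_comm _ (exp _), ← exp_add]
  congr 2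
  linear_combination (-β / 2) * norm_vPost_sq_add_norm_wPost_sq v w n

end Collision

@[fun_prop]
lemma Continuous.vPost {X : Type*} [TopologicalSpace X] {f g : X → R3} {m : X → S2}
    (hf : Continuous f) (hg : Continuous g) (hm : Continuous m) :
    Continuous fun x => vPost (f x) (g x) (m x) := by
  unfold _root_.vPost dotp; fun_prop

@[fun_prop]
lemma Continuous.wPost {X : Type*} [TopologicalSpace X] {f g : X → R3} {m : X → S2}
    (hf : Continuous f) (hg : Continuous g) (hm : Continuous m) :
    Continuous fun x => wPost (f x) (g x) (m x) := by
  unfold _root_.wPost dotp; fun_prop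

@[fun_prop]
lemma Continuous.collKer {X : Type*} [TopologicalSpace X] {f g : X → R3} {m : X → S2}
    (hf : Continuous f) (hg : Continuous g) (hm : Continuous m) :
    Continuous fun x => collKer (f x) (g x) (m x) := by
  unfold _root_.collKer dotp; fun_prop

@[fun_prop]
lemma continuous_Mb (β : ℝ) : Continuous (Mb β) := by
  unfold Mb; fun_prop

theorem LinearMap.measurePreserving_of_involutive {E : Type*} [NormedAddCommGroup E]
    [NormedSpace ℝ E] [MeasurableSpace E] [BorelSpace E] [FiniteDimensional ℝ E]
    (μ : Measure E) [μ.IsAddHaarMeasure] {f : E →ₗ[ℝ] E} (hf : Function.Involutive f) :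
    MeasurePreserving f μ μ := by
  have hdet : LinearMap.det f * LinearMap.det f = 1 := by
    rw [← LinearMap.det_comp, show f ∘ₗ f = LinearMap.id from LinearMap.ext hf,
      LinearMap.det_id]
  have habs : |(LinearMap.det f)⁻¹| = 1 := by
    rcases mul_self_eq_one_iff.1 hdet with h | h <;> simp [h]
  refine ⟨f.continuous_of_finiteDimensional.measurable, ?_⟩
  rw [Measure.map_linearMap_addHaar_eq_smul_addHaar μ (left_ne_zero_of_mul_eq_one hdet), habs,
    ENNReal.ofReal_one, one_smul]

open scoped Pointwise in
theorem MeasureTheory.Measure.measurePreserving_neg_toSphere {E : Type*} [NormedAddCommGroup E]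
    [NormedSpace ℝ E] [MeasurableSpace E] [BorelSpace E] (μ : Measure E) [μ.IsNegInvariant] :
    MeasurePreserving (Neg.neg : Metric.sphere (0 : E) 1 → Metric.sphere (0 : E) 1)
      μ.toSphere μ.toSphere := by
  refine ⟨continuous_neg.measurable, Measure.ext fun s hs => ?_⟩
  have himage : ((↑) : Metric.sphere (0 : E) 1 → E) '' (-s) = -((↑) '' s) := by
    ext y; constructor
    · rintro ⟨x, hx, rfl⟩; exact ⟨-x, hx, by simp⟩
    · rintro ⟨x, hx, hxy⟩; exact ⟨-x, by simpa using hx, by simp [hxy]⟩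
  rw [Measure.map_apply continuous_neg.measurable hs]
  change μ.toSphere (-s) = μ.toSphere s
  rw [Measure.toSphere_apply' _ hs.neg, Measure.toSphere_apply' _ hs, himage, Set.smul_neg,
    Measure.measure_neg]

instance : IsFiniteMeasure sphMeasure := inferInstanceAs (IsFiniteMeasure (Measure.toSphere _))
instance : sphMeasure.IsOpenPosMeasure := inferInstanceAs (Measure.toSphere _).IsOpenPosMeasure
instance : SFinite prodMeas := inferInstanceAs (SFinite (Measure.prod _ _))
instance : prodMeas.IsOpenPosMeasure := inferInstanceAs (Measure.prod _ _).IsOpenPosMeasure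

instance : (volume : Measure (R3 × R3)).IsAddHaarMeasure := Measure.prod.instIsAddHaarMeasure _ _

def collisionLinearMap (n : S2) : (R3 × R3) →ₗ[ℝ] R3 × R3 :=
  LinearMap.id +
    (innerₛₗ ℝ (n : R3) ∘ₗ (LinearMap.fst ℝ R3 R3 - LinearMap.snd ℝ R3 R3)).smulRight
      (-(n : R3), (n : R3))

lemma collisionLinearMap_apply (n : S2) (p : R3 × R3) :
    collisionLinearMap n p = (vPost p.1 p.2 n, wPost p.1 p.2 n) := by
  ext <;> simp [collisionLinearMap, vPost, wPost, dotp, real_inner_comm, sub_eq_add_neg]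

lemma collisionLinearMap_involutive (n : S2) : Function.Involutive (collisionLinearMap n) := by
  intro p
  simp only [collisionLinearMap_apply, vPost_vPost_wPost, wPost_vPost_wPost]

/-- Flipping `n` undoes the sign change `(v' - v⋆')·n = -(v - v⋆)·n`, so that the kernel
`((v - v⋆)·n)₊` is invariant, while `v'` and `v⋆'` do not depend on the sign of `n`. -/
def collisionMap (x : R3 × (R3 × S2)) : R3 × (R3 × S2) :=
  (vPost x.1 x.2.1 x.2.2, wPost x.1 x.2.1 x.2.2, -x.2.2)

lemma collisionMap_involutive : Function.Involutive collisionMap := by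
  rintro ⟨v, w, n⟩
  simp only [collisionMap, vPost_neg, wPost_neg, vPost_vPost_wPost, wPost_vPost_wPost, neg_neg]

/-- Fibred over `n`, this is the skew product of `n ↦ -n` with the linear involutions
`(v, v⋆) ↦ (v', v⋆')`, which have determinant `±1`. -/
lemma measurePreserving_collisionMap :
    MeasurePreserving collisionMap ((volume : Measure R3).prod prodMeas)
      ((volume : Measure R3).prod prodMeas) := by
  let e : R3 × (R3 × S2) ≃ᵐ S2 × (R3 × R3) :=
    MeasurableEquiv.prodAssoc.symm.trans MeasurableEquiv.prodComm
  have he : MeasurePreserving e ((volume : Measure R3).prod prodMeas) (sphMeasure.prod volume) :=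
    Measure.measurePreserving_swap.comp (measurePreserving_prodAssoc volume volume sphMeasure).symm
  have hskew : MeasurePreserving (fun y : S2 × (R3 × R3) => (-y.1, collisionLinearMap y.1 y.2))
      (sphMeasure.prod volume) (sphMeasure.prod volume) :=
    (Measure.measurePreserving_neg_toSphere volume).skew_product
      (g := fun n p => collisionLinearMap n p)
      (by simp only [Function.uncurry_def, collisionLinearMap_apply]; fun_prop)
      (ae_of_all _ fun n =>
        (LinearMap.measurePreserving_of_involutive _ (collisionLinearMap_involutive n)).map_eq)
  convert (he.symm e).comp (hskew.comp he) using 1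
  funext ⟨v, w, n⟩
  simp only [Function.comp_apply, collisionLinearMap_apply]
  rfl

lemma integrable_exp_neg_mul_sq_norm {V : Type*} [NormedAddCommGroup V] [InnerProductSpace ℝ V]
    [FiniteDimensional ℝ V] [MeasurableSpace V] [BorelSpace V] {b : ℝ} (hb : 0 < b) :
    Integrable fun v : V => exp (-b * ‖v‖ ^ 2) := by
  refine (GaussianFourier.integrable_cexp_neg_mul_sq_norm_add (V := V) (b := b)
    (by simpa using hb) 0 0).norm.congr (ae_of_all _ fun v => ?_)
  simp [Complex.norm_exp, ← Complex.ofReal_pow]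

lemma one_add_pow_mul_exp_neg_mul_sq_le {b x : ℝ} (hb : 0 < b) (hx : 0 ≤ x) (k : ℕ) :
    (1 + x) ^ k * exp (-b * x ^ 2) ≤ exp (k ^ 2 / (2 * b)) * exp (-(b / 2) * x ^ 2) := by
  have hpow : (1 + x) ^ k ≤ exp (k * x) := by
    rw [exp_nat_mul]
    exact pow_le_pow_left₀ (by positivity) (by linarith [add_one_le_exp x]) k
  have hquad : k * x - b * x ^ 2 ≤ k ^ 2 / (2 * b) - b / 2 * x ^ 2 := by
    rw [← sub_nonneg]
    have : k ^ 2 / (2 * b) - b / 2 * x ^ 2 - (k * x - b * x ^ 2) = (b * x - k) ^ 2 / (2 * b) := by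
      field_simp; ring
    rw [this]; positivity
  calc (1 + x) ^ k * exp (-b * x ^ 2) ≤ exp (k * x) * exp (-b * x ^ 2) := by gcongr
    _ ≤ exp (k ^ 2 / (2 * b)) * exp (-(b / 2) * x ^ 2) := by
      rw [← exp_add, ← exp_add]; exact exp_le_exp.2 (by linarith)

lemma integrable_one_add_norm_pow_mul_exp_neg_mul_sq {V : Type*} [NormedAddCommGroup V]
    [InnerProductSpace ℝ V] [FiniteDimensional ℝ V] [MeasurableSpace V] [BorelSpace V]
    {b : ℝ} (hb : 0 < b) (k : ℕ) :
    Integrable fun v : V => (1 + ‖v‖) ^ k * exp (-b * ‖v‖ ^ 2) := by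
  refine ((integrable_exp_neg_mul_sq_norm (half_pos hb)).const_mul (exp (k ^ 2 / (2 * b)))).mono'
    (by fun_prop) (ae_of_all _ fun v => ?_)
  rw [Real.norm_of_nonneg (by positivity)]
  exact one_add_pow_mul_exp_neg_mul_sq_le hb (norm_nonneg v) k

lemma Mb_pos {β : ℝ} (hβ : 0 < β) (v : R3) : 0 < Mb β v := by
  unfold Mb; positivity

lemma integrable_one_add_norm_pow_mul_Mb {β : ℝ} (hβ : 0 < β) (k : ℕ) :
    Integrable fun v : R3 => (1 + ‖v‖) ^ k * Mb β v := by
  refine ((integrable_one_add_norm_pow_mul_exp_neg_mul_sq (half_pos hβ) k).const_mul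
    ((β / (2 * π)) ^ ((3 : ℝ) / 2))).congr (ae_of_all _ fun v => ?_)
  simp only [Mb]
  ring_nf

section Dissipation

variable {β : ℝ} {φ : R3 → ℝ}

variable (β φ) in
def weightedLbInt (x : R3 × (R3 × S2)) : ℝ :=
  φ x.1 * Mb β x.1 * LbInt β φ x.1 x.2

variable (β φ) in
def dissipation (x : R3 × (R3 × S2)) : ℝ :=
  (φ x.1 - φ (vPost x.1 x.2.1 x.2.2)) ^ 2 * (Mb β x.1 * Mb β x.2.1 * collKer x.1 x.2.1 x.2.2)

lemma weightedLbInt_add_weightedLbInt_collisionMap (x : R3 × (R3 × S2)) :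
    weightedLbInt β φ x + weightedLbInt β φ (collisionMap x) = dissipation β φ x := by
  obtain ⟨v, w, n⟩ := x
  simp only [weightedLbInt, LbInt, dissipation, collisionMap]
  rw [vPost_neg, vPost_vPost_wPost, collKer_vPost_wPost_neg]
  linear_combination (φ (vPost v w n) * (φ (vPost v w n) - φ v) * collKer v w n) *
    Mb_vPost_mul_Mb_wPost v w n β

lemma dissipation_nonneg (hβ : 0 < β) (x : R3 × (R3 × S2)) : 0 ≤ dissipation β φ x :=
  mul_nonneg (sq_nonneg _)
    (mul_nonneg (mul_pos (Mb_pos hβ _) (Mb_pos hβ _)).le (collKer_nonneg _ _ _))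

section Bounds

variable {C : ℝ} (hφb : ∀ v, |φ v| ≤ C * (1 + ‖v‖ ^ 2))
include hφb

lemma nonneg_of_quadratic_bound : 0 ≤ C := by
  simpa using (abs_nonneg _).trans (hφb 0)

lemma abs_le_of_quadratic_bound (v : R3) : |φ v| ≤ C * (1 + ‖v‖) ^ 2 := by
  refine (hφb v).trans (mul_le_mul_of_nonneg_left ?_ (nonneg_of_quadratic_bound hφb))
  nlinarith [norm_nonneg v]

lemma abs_vPost_le_of_quadratic_bound (v w : R3) (n : S2) :
    |φ (vPost v w n)| ≤ C * ((1 + ‖v‖) ^ 2 * (1 + ‖w‖) ^ 2) := by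
  refine (hφb _).trans (mul_le_mul_of_nonneg_left ?_ (nonneg_of_quadratic_bound hφb))
  nlinarith [norm_vPost_sq_add_norm_wPost_sq v w n, sq_nonneg ‖wPost v w n‖, norm_nonneg v,
    norm_nonneg w, mul_nonneg (norm_nonneg v) (norm_nonneg w)]

lemma abs_weightedLbInt_le (hβ : 0 < β) (x : R3 × (R3 × S2)) :
    |weightedLbInt β φ x| ≤
      2 * C ^ 2 * ((1 + ‖x.1‖) ^ 5 * Mb β x.1 * ((1 + ‖x.2.1‖) ^ 5 * Mb β x.2.1)) := by
  obtain ⟨v, w, n⟩ := x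
  set X := 1 + ‖v‖
  set Y := 1 + ‖w‖
  have hY : 1 ≤ Y := by simp [Y]
  have hC := nonneg_of_quadratic_bound hφb
  have hdiff : |φ v - φ (vPost v w n)| ≤ 2 * C * (X ^ 2 * Y ^ 2) := by
    have : X ^ 2 ≤ X ^ 2 * Y ^ 2 := le_mul_of_one_le_right (by positivity) (one_le_pow₀ hY)
    linarith [abs_sub (φ v) (φ (vPost v w n)), abs_le_of_quadratic_bound hφb v,
      abs_vPost_le_of_quadratic_bound hφb v w n, mul_le_mul_of_nonneg_left this hC]
  have hB : collKer v w n ≤ X * Y := by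
    nlinarith [collKer_le v w n, mul_nonneg (norm_nonneg v) (norm_nonneg w)]
  have hMv := (Mb_pos hβ v).le
  have hMw := (Mb_pos hβ w).le
  have hBnn := collKer_nonneg v w n
  simp only [weightedLbInt, LbInt]
  rw [abs_mul, abs_mul, abs_mul, abs_mul, abs_of_nonneg hMv, abs_of_nonneg hMw,
    abs_of_nonneg hBnn]
  calc |φ v| * Mb β v * (|φ v - φ (vPost v w n)| * Mb β w * collKer v w n)
      ≤ C * X ^ 2 * Mb β v * (2 * C * (X ^ 2 * Y ^ 2) * Mb β w * (X * Y)) := by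
        have := abs_le_of_quadratic_bound hφb v
        gcongr
    _ = 2 * C ^ 2 * (X ^ 5 * Mb β v * (Y ^ 3 * Mb β w)) := by ring
    _ ≤ 2 * C ^ 2 * (X ^ 5 * Mb β v * (Y ^ 5 * Mb β w)) := by
        gcongr
        norm_num

lemma integrable_weightedLbInt (hβ : 0 < β) (hφc : Continuous φ) :
    Integrable (weightedLbInt β φ) (volume.prod prodMeas) := by
  have hM := integrable_one_add_norm_pow_mul_Mb hβ 5
  refine ((hM.mul_prod (hM.comp_fst sphMeasure)).const_mul (2 * C ^ 2)).mono'
    (by unfold weightedLbInt LbInt; fun_prop) (ae_of_all _ fun x => ?_)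
  exact abs_weightedLbInt_le hφb hβ x

end Bounds

lemma integral_weightedLbInt_eq_zero {γ : ℝ} (hγ : γ ≠ 0) (hL : ∀ v, Lb β γ φ v = 0)
    (hint : Integrable (weightedLbInt β φ) (volume.prod prodMeas)) :
    ∫ x, weightedLbInt β φ x ∂volume.prod prodMeas = 0 := by
  have hLb (v : R3) : ∫ p, LbInt β φ v p ∂prodMeas = 0 :=
    (mul_eq_zero.1 (hL v)).resolve_left hγ
  rw [integral_prod _ hint]
  simp only [weightedLbInt, integral_const_mul, hLb, mul_zero, integral_zero]

lemma measurableEmbedding_collisionMap : MeasurableEmbedding collisionMap :=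
  (MeasurableEquiv.ofInvolutive _ collisionMap_involutive
    measurePreserving_collisionMap.measurable).measurableEmbedding

lemma integrable_dissipation_and_integral_eq_zero (hint : Integrable (weightedLbInt β φ) (volume.prod prodMeas))
    (hzero : ∫ x, weightedLbInt β φ x ∂volume.prod prodMeas = 0) :
    Integrable (dissipation β φ) (volume.prod prodMeas) ∧
      ∫ x, dissipation β φ x ∂volume.prod prodMeas = 0 := by
  have hsymm : Integrable (weightedLbInt β φ ∘ collisionMap) (volume.prod prodMeas) :=
    (measurePreserving_collisionMap.integrable_comp_emb measurableEmbedding_collisionMap).2 hint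
  have hsplit : dissipation β φ = weightedLbInt β φ + weightedLbInt β φ ∘ collisionMap :=
    funext fun x => (weightedLbInt_add_weightedLbInt_collisionMap x).symm
  refine ⟨hsplit ▸ hint.add hsymm, ?_⟩
  rw [hsplit, integral_add' hint hsymm, Function.comp_def,
    measurePreserving_collisionMap.integral_comp measurableEmbedding_collisionMap, hzero, add_zero]

lemma dissipation_eq_zero_of_integral_eq_zero (hβ : 0 < β) (hφc : Continuous φ)
    (hint : Integrable (dissipation β φ) (volume.prod prodMeas))
    (hzero : ∫ x, dissipation β φ x ∂volume.prod prodMeas = 0) (x : R3 × (R3 × S2)) :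
    dissipation β φ x = 0 := by
  have hae := (integral_eq_zero_iff_of_nonneg (dissipation_nonneg hβ) hint).1 hzero
  have hcont : Continuous (dissipation β φ) := by unfold dissipation; fun_prop
  exact congrFun ((hcont.ae_eq_iff_eq _ continuous_const).1 hae) x

lemma apply_vPost_eq_of_dissipation_eq_zero (hβ : 0 < β) (hD : ∀ x, dissipation β φ x = 0)
    {v w : R3} {n : S2} (h : 0 < dotp (v - w) n) : φ (vPost v w n) = φ v := by
  have hpos : 0 < Mb β v * Mb β w * collKer v w n :=
    mul_pos (mul_pos (Mb_pos hβ v) (Mb_pos hβ w)) (lt_max_of_lt_left h)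
  have := hD (v, w, n)
  simp only [dissipation, mul_eq_zero, hpos.ne', or_false, pow_eq_zero_iff two_ne_zero,
    sub_eq_zero] at this
  exact this.symm

lemma eq_apply_zero_of_dissipation_eq_zero (hβ : 0 < β) (hD : ∀ x, dissipation β φ x = 0)
    (u : R3) : φ u = φ 0 := by
  rcases eq_or_ne u 0 with rfl | hu
  · rfl
  have hu' : 0 < ‖u‖ := norm_pos_iff.2 hu
  let n : S2 := ⟨‖u‖⁻¹ • u, by simp [norm_smul, hu'.ne']⟩
  have hdot : dotp (u - 0) n = ‖u‖ := by
    simp [n, dotp, real_inner_smul_right]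
    field_simp
  have hpost : vPost u 0 n = 0 := by
    rw [vPost, hdot]
    simp [n, smul_smul, hu'.ne']
  rw [← apply_vPost_eq_of_dissipation_eq_zero hβ hD (hdot ▸ hu'), hpost]

end Dissipation

/-- The kernel of the linear Boltzmann operator `L_β` consists exactly of the constant functions:
for continuous `φ` with `|φ(v)| ≤ C (1 + |v|²)`, one has `L_β φ ≡ 0` iff `φ` is constant. -/
theorem linearBoltzmann_kernel_eq_constants (β γ : ℝ) (hβ : 0 < β) (hγ : 0 < γ)
    (φ : R3 → ℝ) (hφc : Continuous φ)
    (hφb : ∃ C : ℝ, 0 < C ∧ ∀ v, |φ v| ≤ C * (1 + ‖v‖ ^ 2)) :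
    (∀ v, Lb β γ φ v = 0) ↔ (∃ c : ℝ, ∀ v, φ v = c) := by
  refine ⟨fun hL => ?_, fun ⟨c, hc⟩ v => by simp [Lb, LbInt, hc]⟩
  obtain ⟨C, -, hC⟩ := hφb
  have hint := integrable_weightedLbInt hC hβ hφc
  obtain ⟨hDint, hDzero⟩ :=
    integrable_dissipation_and_integral_eq_zero hint (integral_weightedLbInt_eq_zero hγ.ne' hL hint)
  have hD := dissipation_eq_zero_of_integral_eq_zero hβ hφc hDint hDzero
  exact ⟨φ 0, eq_apply_zero_of_dissipation_eq_zero hβ hD⟩
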